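/- arXiv:1807.05174 — 4 statements merged into one kernel-verified Lean document; each statement's English description precedes it below -/
import Mathlib

section
/- Evaluation of check-names: Fix ZFC sets P, G and 𝟙 with 𝟙 ∈ P and 𝟙 ∈ G. Let c : ZFSet → ZFSet satisfy the check recursion for 𝟙, and let v : ZFSet → ZFSet satisfy the name-value recursion for P and G. Then v (c y) = y for every ZFC set y. -/
/-- Evaluation of check-names: `val(G, check(y)) = y` whenever `𝟙 ∈ P` and
`𝟙 ∈ G`. -/
theorem valcheck (P G one : ZFSet) (h_oneP : one ∈ P) (h_oneG : one ∈ G)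
    (c : ZFSet → ZFSet)
    (hc : ∀ y w : ZFSet, w ∈ c y ↔ ∃ z ∈ y, w = ZFSet.pair (c z) one)
    (v : ZFSet → ZFSet)
    (hv : ∀ τ x : ZFSet, x ∈ v τ ↔
      ∃ σ p : ZFSet, ZFSet.pair σ p ∈ τ ∧ p ∈ P ∧ p ∈ G ∧ x = v σ) :
    ∀ y : ZFSet, v (c y) = y := by
  intro y
  induction y using ZFSet.inductionOn with
  | h y ih =>
    ext x
    rw [hv]
    constructor
    · rintro ⟨σ, p, hmem, hpP, hpG, rfl⟩
      rw [hc] at hmem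
      obtain ⟨z, hz, heq⟩ := hmem
      obtain ⟨h1, h2⟩ := ZFSet.pair_injective heq
      rw [h1, ih z hz]
      exact hz
    · intro hx
      exact ⟨c x, one, (hc y _).mpr ⟨x, hx, rfl⟩, h_oneP, h_oneG, (ih x hx).symm⟩
end

section
/- Transitivity of the generic extension: Fix ZFC sets P and G, let v : ZFSet → ZFSet satisfy the name-value recursion for P and G, and let M be a transitive ZFC set. If τ ∈ M and y ∈ v τ, then there exists θ ∈ M with y = v θ. Consequently the generic extension M[G] = {v τ | τ ∈ M} is closed under membership: every element of an element of M[G] is again in M[G]. -/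
/-- Transitivity of the generic extension `M[G] = {val(G, τ) : τ ∈ M}`. -/
theorem trans_Gen_Ext (P G : ZFSet) (v : ZFSet → ZFSet)
    (hv : ∀ τ x : ZFSet, x ∈ v τ ↔
      ∃ σ p : ZFSet, ZFSet.pair σ p ∈ τ ∧ p ∈ P ∧ p ∈ G ∧ x = v σ)
    (M : ZFSet) (htrans : ∀ x ∈ M, ∀ y ∈ x, y ∈ M) :
    (∀ τ ∈ M, ∀ y ∈ v τ, ∃ θ ∈ M, y = v θ) ∧
      ∀ x : ZFSet, (∃ τ ∈ M, x = v τ) →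
        ∀ y ∈ x, ∃ θ ∈ M, y = v θ := by
  have h1 : ∀ τ ∈ M, ∀ y ∈ v τ, ∃ θ ∈ M, y = v θ := by
    intro τ hτ y hy
    obtain ⟨σ, p, hpair, _, _, hyσ⟩ := (hv τ y).mp hy
    have hpM : ZFSet.pair σ p ∈ M := htrans τ hτ _ hpair
    have hsσ : ({σ} : ZFSet) ∈ ZFSet.pair σ p := by
      simp [ZFSet.pair]
    have hsM : ({σ} : ZFSet) ∈ M := htrans _ hpM _ hsσ
    have hσM : σ ∈ M := htrans _ hsM σ (by simp)
    exact ⟨σ, hσM, hyσ⟩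
  refine ⟨h1, ?_⟩
  rintro x ⟨τ, hτ, rfl⟩ y hy
  exact h1 τ hτ y hy
end

section
/- The canonical name of the generic filter evaluates to the filter: Fix ZFC sets P, G and 𝟙 with G ⊆ P and 𝟙 ∈ G and 𝟙 ∈ P. Let c : ZFSet → ZFSet satisfy the check recursion for 𝟙 and let v : ZFSet → ZFSet satisfy the name-value recursion for P and G. Let Ġ be a ZFC set such that for every w, w ∈ Ġ if and only if there exists p ∈ P with w = ZFSet.pair (c p) p. Then v Ġ = G. -/
/-- The canonical name `Ġ = {⟨p̌, p⟩ : p ∈ P}` of the generic filter evaluates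
to the filter: `val(G, Ġ) = G`. -/
theorem val_G_dot (P G one : ZFSet) (hGP : G ⊆ P)
    (h_oneG : one ∈ G) (h_oneP : one ∈ P)
    (c : ZFSet → ZFSet)
    (hc : ∀ y w : ZFSet, w ∈ c y ↔ ∃ z ∈ y, w = ZFSet.pair (c z) one)
    (v : ZFSet → ZFSet)
    (hv : ∀ τ x : ZFSet, x ∈ v τ ↔
      ∃ σ p : ZFSet, ZFSet.pair σ p ∈ τ ∧ p ∈ P ∧ p ∈ G ∧ x = v σ)
    (Gdot : ZFSet)
    (hGdot : ∀ w : ZFSet, w ∈ Gdot ↔ ∃ p ∈ P, w = ZFSet.pair (c p) p) :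
    v Gdot = G := by
  have hvc : ∀ y : ZFSet, v (c y) = y := by
    intro y
    induction y using ZFSet.inductionOn with
    | h y ih =>
      ext x
      rw [hv]
      constructor
      · rintro ⟨σ, p, hmem, hpP, hpG, rfl⟩
        rw [hc] at hmem
        obtain ⟨z, hz, heq⟩ := hmem
        obtain ⟨h1, h2⟩ := ZFSet.pair_injective heq
        subst h1
        rw [ih z hz]
        exact hz
      · intro hx
        exact ⟨c x, one, (hc y _).mpr ⟨x, hx, rfl⟩, h_oneP, h_oneG, (ih x hx).symm⟩
  ext x
  rw [hv]
  constructor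
  · rintro ⟨σ, p, hmem, hpP, hpG, rfl⟩
    rw [hGdot] at hmem
    obtain ⟨q, hq, heq⟩ := hmem
    obtain ⟨h1, h2⟩ := ZFSet.pair_injective heq
    subst h1; subst h2
    rwa [hvc]
  · intro hx
    exact ⟨c x, x, (hGdot _).mpr ⟨x, hGP hx, rfl⟩, hGP hx, hx, (hvc x).symm⟩
end

section
/- The generic extension satisfies the pairing axiom: Fix ZFC sets P, G and 𝟙 with 𝟙 ∈ P and 𝟙 ∈ G, let v : ZFSet → ZFSet satisfy the name-value recursion for P and G, and let M be a transitive ZFC set satisfying the relativized pairing axiom with P ∈ M. Let M[G] denote the collection {v τ | τ ∈ M}. Then for all x, y ∈ M[G] there exists z ∈ M[G] with x ∈ z, y ∈ z, and every w ∈ M[G] with w ∈ z satisfies w = x or w = y. -/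
/-- The generic extension `M[G] = {val(G, τ) : τ ∈ M}` satisfies the pairing
axiom. -/
theorem pairing_in_genext (P G one : ZFSet) (h_oneP : one ∈ P) (h_oneG : one ∈ G)
    (v : ZFSet → ZFSet)
    (hv : ∀ τ x : ZFSet, x ∈ v τ ↔
      ∃ σ p : ZFSet, ZFSet.pair σ p ∈ τ ∧ p ∈ P ∧ p ∈ G ∧ x = v σ)
    (M : ZFSet) (htrans : ∀ x ∈ M, ∀ y ∈ x, y ∈ M)
    (hpair : ∀ a ∈ M, ∀ b ∈ M, ∃ z ∈ M, a ∈ z ∧ b ∈ z ∧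
      ∀ w ∈ M, w ∈ z → w = a ∨ w = b)
    (hPM : P ∈ M) :
    ∀ x, (∃ τ ∈ M, x = v τ) → ∀ y, (∃ ρ ∈ M, y = v ρ) →
      ∃ z, (∃ σ ∈ M, z = v σ) ∧ x ∈ z ∧ y ∈ z ∧
        ∀ w, (∃ δ ∈ M, w = v δ) → w ∈ z → w = x ∨ w = y := by
  rintro x ⟨τ, hτ, hx⟩ y ⟨ρ, hρ, hy⟩
  have honeM : one ∈ M := htrans P hPM one h_oneP
  have pairM : ∀ a ∈ M, ∀ b ∈ M, ({a, b} : ZFSet) ∈ M := by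
    intro a ha b hb
    obtain ⟨z, hzM, haz, hbz, hz⟩ := hpair a ha b hb
    have heq : z = {a, b} := by
      apply ZFSet.ext; intro w
      simp only [ZFSet.mem_insert_iff, ZFSet.mem_singleton]
      constructor
      · intro hw; exact hz w (htrans z hzM w hw) hw
      · rintro (rfl | rfl) <;> assumption
    exact heq ▸ hzM
  have hkp : ∀ a ∈ M, ∀ b ∈ M, ZFSet.pair a b ∈ M := by
    intro a ha b hb
    have h1 : ({a} : ZFSet) ∈ M := by
      have h := pairM a ha a ha
      have : ({a, a} : ZFSet) = {a} := by
        apply ZFSet.ext; intro w; simp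
      rwa [this] at h
    exact pairM _ h1 _ (pairM a ha b hb)
  set σ : ZFSet := {ZFSet.pair τ one, ZFSet.pair ρ one} with hσ
  have hσM : σ ∈ M := pairM _ (hkp τ hτ one honeM) _ (hkp ρ hρ one honeM)
  refine ⟨v σ, ⟨σ, hσM, rfl⟩, ?_, ?_, ?_⟩
  · rw [hv]
    exact ⟨τ, one, by simp [hσ], h_oneP, h_oneG, hx⟩
  · rw [hv]
    exact ⟨ρ, one, by simp [hσ], h_oneP, h_oneG, hy⟩
  · rintro w - hw
    rw [hv] at hw
    obtain ⟨σ', p, hmem, -, -, rfl⟩ := hw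
    simp only [hσ, ZFSet.mem_insert_iff, ZFSet.mem_singleton] at hmem
    rcases hmem with h | h
    · left; rw [hx, (ZFSet.pair_injective h).1]
    · right; rw [hy, (ZFSet.pair_injective h).1]
end
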